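/- Let S be a valid SPGM and t a node of S such that every message sent by every child c of t satisfies, for every partial assignment, μ_{c→s;j} = ∑_{τ ∈ T(S_c)} μ_{root(τ)→s;j}, where S_c is the sub-SPGM rooted at c, T(S_c) is its set of subtrees, and the summand is the corresponding message computed within the subtree τ. Then every message sent by t satisfies the same identity with T(S_t) in place of T(S_c), where S_t is the sub-SPGM rooted at t. -/

import Mathlib

attribute [local instance] Classical.propDecidable

noncomputable section

/-- Indicator variable `[v]_k` relative to a partial assignment `y`
(`y v = none` means `v` is unobserved). -/
def Indicator {Var : Type} (y : Var → Option ℕ) (v : Var) (k : ℕ) : ℝ :=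
  match y v with
  | none => 1
  | some i => if i = k then 1 else 0

/-- Kinds of nodes of a sum-product graphical model: variable nodes (Vnodes),
product nodes, observed sum nodes and unobserved sum nodes. -/
inductive SPGMKind (Xvar Zvar : Type) : Type where
  | vnode (x : Xvar)
  | prod
  | sumObs (z : Zvar)
  | sumUnobs

/-- A sum-product graphical model (SPGM) over variables `Xvar` (with domain sizes `Xdom`)
and context variables `Zvar` (with domain sizes `Zdom`).  The underlying directed graph
is given by `children`; acyclicity is encoded by the strictly decreasing `rank`.
`Q`/`W` are the edge weights of observed/unobserved sum nodes (`Q t k` is the weight of the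
`k`-th child edge of `t`), `Pcond t s k j` is the conditional table `P_{s,t}(k | j)` used when
`s` is a Vparent of the Vnode `t`, and `Punary t k` is the unary table `P_t(k)` used when the
Vnode `t` has no Vparent. -/
structure SPGM (Xvar Zvar : Type) (Xdom : Xvar → ℕ) (Zdom : Zvar → ℕ) where
  V : Type
  fintypeV : Fintype V
  decEqV : DecidableEq V
  root : V
  kind : V → SPGMKind Xvar Zvar
  children : V → List V
  rank : V → ℕ
  rank_lt : ∀ t c, c ∈ children t → rank c < rank t
  Q : V → ℕ → ℝ
  W : V → ℕ → ℝ
  Pcond : V → V → ℕ → ℕ → ℝ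
  Punary : V → ℕ → ℝ

attribute [instance] SPGM.fintypeV SPGM.decEqV

namespace SPGM

variable {Xvar Zvar : Type} {Xdom : Xvar → ℕ} {Zdom : Zvar → ℕ}

def isVnode (S : SPGM Xvar Zvar Xdom Zdom) (t : S.V) : Prop :=
  ∃ x, S.kind t = SPGMKind.vnode x

def isProd (S : SPGM Xvar Zvar Xdom Zdom) (t : S.V) : Prop :=
  S.kind t = SPGMKind.prod

def isSumObs (S : SPGM Xvar Zvar Xdom Zdom) (t : S.V) : Prop :=
  ∃ z, S.kind t = SPGMKind.sumObs z

def isSumUnobs (S : SPGM Xvar Zvar Xdom Zdom) (t : S.V) : Prop :=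
  S.kind t = SPGMKind.sumUnobs

def isSum (S : SPGM Xvar Zvar Xdom Zdom) (t : S.V) : Prop :=
  S.isSumObs t ∨ S.isSumUnobs t

/-- The variable labeling a node, if any. -/
def label (S : SPGM Xvar Zvar Xdom Zdom) (t : S.V) : Option (Xvar ⊕ Zvar) :=
  match S.kind t with
  | SPGMKind.vnode x => some (Sum.inl x)
  | SPGMKind.sumObs z => some (Sum.inr z)
  | _ => none

/-- Domain size of the variable of a Vnode (`0` for non-Vnodes). -/
def domOf (S : SPGM Xvar Zvar Xdom Zdom) (t : S.V) : ℕ :=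
  match S.kind t with
  | SPGMKind.vnode x => Xdom x
  | _ => 0

/-- Reachability along directed edges. -/
def Reach (S : SPGM Xvar Zvar Xdom Zdom) : S.V → S.V → Prop :=
  Relation.ReflTransGen fun a b => b ∈ S.children a

/-- The scope of a node: all variables labeling nodes of the sub-DAG rooted at it. -/
def scope (S : SPGM Xvar Zvar Xdom Zdom) (t : S.V) : Set (Xvar ⊕ Zvar) :=
  {v | ∃ u, S.Reach t u ∧ S.label u = some v}

/-- There is a (nonempty) directed path from `s` to `t` containing no intermediate Vnode. -/
inductive ReachNoV (S : SPGM Xvar Zvar Xdom Zdom) : S.V → S.V → Prop where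
  | base {s c : S.V} : c ∈ S.children s → ReachNoV S s c
  | step {s t c : S.V} : ReachNoV S s t → ¬ S.isVnode t → c ∈ S.children t → ReachNoV S s c

/-- `s` is a Vparent of `t`. -/
def vparent (S : SPGM Xvar Zvar Xdom Zdom) (s t : S.V) : Prop :=
  S.isVnode s ∧ S.ReachNoV s t

/-- Validity of an SPGM: structural conditions and nonnegativity of all parameters. -/
structure Valid (S : SPGM Xvar Zvar Xdom Zdom) : Prop where
  xdom_pos : ∀ x : Xvar, 0 < Xdom x
  zdom_pos : ∀ z : Zvar, 0 < Zdom z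
  reach_root : ∀ v : S.V, S.Reach S.root v
  vnode_child : ∀ t : S.V, S.isVnode t → (S.children t).length ≤ 1
  vnode_scope : ∀ (t : S.V) (x : Xvar) (c : S.V), S.kind t = SPGMKind.vnode x →
    c ∈ S.children t → Sum.inl x ∉ S.scope c
  sum_child : ∀ t : S.V, S.isSum t → S.children t ≠ []
  sumObs_card : ∀ (t : S.V) (z : Zvar), S.kind t = SPGMKind.sumObs z →
    (S.children t).length = Zdom z
  sum_scope : ∀ t : S.V, S.isSum t →
    ∀ c ∈ S.children t, ∀ c' ∈ S.children t, S.scope c = S.scope c'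
  sumObs_scope : ∀ (t : S.V) (z : Zvar) (c : S.V), S.kind t = SPGMKind.sumObs z →
    c ∈ S.children t → Sum.inr z ∉ S.scope c
  prod_child : ∀ t : S.V, S.isProd t → S.children t ≠ []
  prod_scope : ∀ t : S.V, S.isProd t →
    (S.children t).Pairwise fun c c' => Disjoint (S.scope c) (S.scope c')
  Q_nonneg : ∀ (t : S.V) (k : ℕ), 0 ≤ S.Q t k
  W_nonneg : ∀ (t : S.V) (k : ℕ), 0 ≤ S.W t k
  Pcond_nonneg : ∀ (t s : S.V) (k j : ℕ), 0 ≤ S.Pcond t s k j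
  Punary_nonneg : ∀ (t : S.V) (k : ℕ), 0 ≤ S.Punary t k

/-- The conditional/unary tables of the SPGM are normalized probability tables. -/
structure Normalized (S : SPGM Xvar Zvar Xdom Zdom) : Prop where
  Pcond_sum : ∀ t s : S.V, S.isVnode t → S.vparent s t → ∀ j < S.domOf s,
    ∑ k ∈ Finset.range (S.domOf t), S.Pcond t s k j = 1
  Punary_sum : ∀ t : S.V, S.isVnode t → (¬ ∃ s, S.vparent s t) →
    ∑ k ∈ Finset.range (S.domOf t), S.Punary t k = 1

/-- Message passing, with explicit fuel (the fuel never runs out thanks to `rank_lt`):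
`msgAux S y n t s j` is the message `μ_{t→s;j}` (`s = none` denotes the fictitious root). -/
def msgAux (S : SPGM Xvar Zvar Xdom Zdom) (y : (Xvar ⊕ Zvar) → Option ℕ) :
    ℕ → S.V → Option S.V → ℕ → ℝ
  | 0, _, _, _ => 1
  | n + 1, t, s, j =>
    match S.kind t with
    | SPGMKind.vnode x =>
        ∑ k ∈ Finset.range (Xdom x),
          (match s with
            | some s' => S.Pcond t s' k j
            | none => S.Punary t k) *
            Indicator y (Sum.inl x) k *
            (match S.children t with
              | [] => (1 : ℝ)
              | c :: _ => msgAux S y n c (some t) k)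
    | SPGMKind.prod => ((S.children t).map fun c => msgAux S y n c s j).prod
    | SPGMKind.sumObs z =>
        ∑ k ∈ Finset.range (S.children t).length,
          Indicator y (Sum.inr z) k * S.Q t k * msgAux S y n ((S.children t).getD k t) s j
    | SPGMKind.sumUnobs =>
        ∑ k ∈ Finset.range (S.children t).length,
          S.W t k * msgAux S y n ((S.children t).getD k t) s j

/-- The message `μ_{t→s;j}` sent by node `t` under partial assignment `y`. -/
def msg (S : SPGM Xvar Zvar Xdom Zdom) (y : (Xvar ⊕ Zvar) → Option ℕ)
    (t : S.V) (s : Option S.V) (j : ℕ) : ℝ :=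
  msgAux S y (S.rank t + 1) t s j

/-- Evaluation of the SPGM at the partial assignment `y` (value of the root message). -/
def eval (S : SPGM Xvar Zvar Xdom Zdom) (y : (Xvar ⊕ Zvar) → Option ℕ) : ℝ :=
  S.msg y S.root none 0

end SPGM

namespace SPGM

variable {Xvar Zvar : Type} {Xdom : Xvar → ℕ} {Zdom : Zvar → ℕ}

/-- Edge of the subtree determined by the choice function `σ`: a Vnode or product node keeps
all its child edges, a sum node `t` keeps only the edge to its `σ t`-th child. -/
def subEdge (S : SPGM Xvar Zvar Xdom Zdom) (σ : S.V → ℕ) (t c : S.V) : Prop :=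
  (¬ S.isSum t ∧ c ∈ S.children t) ∨ (S.isSum t ∧ c = (S.children t).getD (σ t) t)

/-- `KeepAt S σ r v`: node `v` is kept in the subtree with root `r` determined by the
choice function `σ`. -/
inductive KeepAt (S : SPGM Xvar Zvar Xdom Zdom) (σ : S.V → ℕ) : S.V → S.V → Prop where
  | refl (r : S.V) : KeepAt S σ r r
  | step {r t c : S.V} : KeepAt S σ r t → S.subEdge σ t c → KeepAt S σ r c

/-- Node `v` is kept in the subtree of `S` (rooted at the root of `S`) determined by `σ`. -/
def Keep (S : SPGM Xvar Zvar Xdom Zdom) (σ : S.V → ℕ) (v : S.V) : Prop :=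
  KeepAt S σ S.root v

/-- The set of subtrees of the sub-SPGM rooted at `r`, represented by their canonical
choice functions: `σ t` is a valid child index at every sum node and is `0` at every node
that is not a kept sum node.  Distinct canonical choice functions correspond exactly to
distinct subtrees. -/
def subtreesAt (S : SPGM Xvar Zvar Xdom Zdom) (r : S.V) : Set (S.V → ℕ) :=
  {σ | (∀ t : S.V, S.isSum t → σ t < (S.children t).length) ∧
       (∀ t : S.V, ¬ (KeepAt S σ r t ∧ S.isSum t) → σ t = 0)}

/-- The set `T(S)` of subtrees of `S`, represented by canonical choice functions. -/
def subtrees (S : SPGM Xvar Zvar Xdom Zdom) : Set (S.V → ℕ) :=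
  S.subtreesAt S.root

/-- Message passing within the subtree determined by `σ` (with fuel, as in `msgAux`):
at a sum node only the chosen child is used. -/
def msgSubAux (S : SPGM Xvar Zvar Xdom Zdom) (σ : S.V → ℕ)
    (y : (Xvar ⊕ Zvar) → Option ℕ) : ℕ → S.V → Option S.V → ℕ → ℝ
  | 0, _, _, _ => 1
  | n + 1, t, s, j =>
    match S.kind t with
    | SPGMKind.vnode x =>
        ∑ k ∈ Finset.range (Xdom x),
          (match s with
            | some s' => S.Pcond t s' k j
            | none => S.Punary t k) *
            Indicator y (Sum.inl x) k *
            (match S.children t with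
              | [] => (1 : ℝ)
              | c :: _ => msgSubAux S σ y n c (some t) k)
    | SPGMKind.prod => ((S.children t).map fun c => msgSubAux S σ y n c s j).prod
    | SPGMKind.sumObs z =>
        Indicator y (Sum.inr z) (σ t) * S.Q t (σ t) *
          msgSubAux S σ y n ((S.children t).getD (σ t) t) s j
    | SPGMKind.sumUnobs =>
        S.W t (σ t) * msgSubAux S σ y n ((S.children t).getD (σ t) t) s j

/-- The message `μ_{t→s;j}` computed within the subtree determined by `σ`. -/
def msgSub (S : SPGM Xvar Zvar Xdom Zdom) (σ : S.V → ℕ) (y : (Xvar ⊕ Zvar) → Option ℕ)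
    (t : S.V) (s : Option S.V) (j : ℕ) : ℝ :=
  msgSubAux S σ y (S.rank t + 1) t s j

/-- Evaluation of the subtree `τ` of `S` determined by `σ` at the partial assignment `y`. -/
def evalSub (S : SPGM Xvar Zvar Xdom Zdom) (σ : S.V → ℕ)
    (y : (Xvar ⊕ Zvar) → Option ℕ) : ℝ :=
  S.msgSub σ y S.root none 0

/-- An edge of `S` kept in the subtree determined by `σ`. -/
def keptEdge (S : SPGM Xvar Zvar Xdom Zdom) (σ : S.V → ℕ) (t c : S.V) : Prop :=
  S.Keep σ t ∧ S.subEdge σ t c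

/-- The underlying undirected (simple) graph of the subtree determined by `σ`:
vertices are the kept nodes, adjacency is the (undirected) kept-edge relation. -/
def subtreeGraph (S : SPGM Xvar Zvar Xdom Zdom) (σ : S.V → ℕ) : SimpleGraph S.V where
  Adj a b := a ≠ b ∧ S.Keep σ a ∧ S.Keep σ b ∧ (S.keptEdge σ a b ∨ S.keptEdge σ b a)
  symm := by
    constructor
    intro a b h
    exact ⟨Ne.symm h.1, h.2.2.1, h.2.1, h.2.2.2.symm⟩
  loopless := by
    constructor
    intro a h
    exact h.1 rfl

/-- The scope of the subtree determined by `σ`: all variables labeling kept nodes. -/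
def subtreeScope (S : SPGM Xvar Zvar Xdom Zdom) (σ : S.V → ℕ) : Set (Xvar ⊕ Zvar) :=
  {v | ∃ t : S.V, S.Keep σ t ∧ S.label t = some v}

/-- The coefficient `λ_τ` of the subtree determined by `σ`: the product of the weights of
all kept sum nodes. -/
def lam (S : SPGM Xvar Zvar Xdom Zdom) (σ : S.V → ℕ) : ℝ :=
  (∏ t : S.V, if S.Keep σ t ∧ S.isSumObs t then S.Q t (σ t) else 1) *
    (∏ t : S.V, if S.Keep σ t ∧ S.isSumUnobs t then S.W t (σ t) else 1)

/-- The product of the indicator variables in `z_τ` (one for each kept observed sum node),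
evaluated relative to the partial assignment `y`. -/
def zInd (S : SPGM Xvar Zvar Xdom Zdom) (σ : S.V → ℕ)
    (y : (Xvar ⊕ Zvar) → Option ℕ) : ℝ :=
  ∏ t : S.V,
    match S.kind t with
    | SPGMKind.sumObs z => if S.Keep σ t then Indicator y (Sum.inr z) (σ t) else 1
    | _ => 1

/-- Value of a total assignment `x` of the X-variables at a Vnode (`0` at other nodes). -/
def xval (S : SPGM Xvar Zvar Xdom Zdom) (x : Xvar → ℕ) (t : S.V) : ℕ :=
  match S.kind t with
  | SPGMKind.vnode xv => x xv
  | _ => 0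

/-- A directed path along edges of the subtree determined by `σ` with no intermediate
Vnode. -/
inductive ReachNoVSub (S : SPGM Xvar Zvar Xdom Zdom) (σ : S.V → ℕ) : S.V → S.V → Prop where
  | base {s c : S.V} : S.subEdge σ s c → ReachNoVSub S σ s c
  | step {s t c : S.V} : ReachNoVSub S σ s t → ¬ S.isVnode t → S.subEdge σ t c →
      ReachNoVSub S σ s c

/-- `s` is a Vparent of `t` within the subtree determined by `σ`. -/
def vparentSub (S : SPGM Xvar Zvar Xdom Zdom) (σ : S.V → ℕ) (s t : S.V) : Prop :=
  S.isVnode s ∧ ReachNoVSub S σ s t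

/-- The tree graphical model distribution `P_τ` of the subtree determined by `σ`, as a
function of a total assignment `x` of the X-variables: the product of the unary tables of
the kept Vnodes without Vparent in the subtree and of the conditional tables of all
Vparent-child Vnode pairs of the subtree. -/
def Ptau (S : SPGM Xvar Zvar Xdom Zdom) (σ : S.V → ℕ) (x : Xvar → ℕ) : ℝ :=
  (∏ t : S.V,
      if S.Keep σ t ∧ S.isVnode t ∧ ¬ (∃ s, S.Keep σ s ∧ S.vparentSub σ s t) then
        S.Punary t (S.xval x t)
      else 1) *
    ∏ p : S.V × S.V,
      if S.Keep σ p.1 ∧ S.Keep σ p.2 ∧ S.isVnode p.2 ∧ S.vparentSub σ p.1 p.2 then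
        S.Pcond p.2 p.1 (S.xval x p.2) (S.xval x p.1)
      else 1

/-- The number of edges of the DAG underlying `S`. -/
def edgeCount (S : SPGM Xvar Zvar Xdom Zdom) : ℕ :=
  ∑ v : S.V, (S.children v).length

end SPGM

/-!
A subtree is encoded by its choice function `σ`, and a message computed within it depends only
on the choices at the descendants of the sender; the proof follows the kind of `t`.
A Vnode with child `c` has the same subtrees as `c`, so the identity follows by exchanging the
sum over the values of `X_t` with the sum over subtrees.
At a sum node, the subtrees with `σ t = k` are, once `σ t` is reset, exactly the subtrees of the
`k`-th child, so the sum over subtrees splits into the weighted sum over children.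
At a product node the children have disjoint nonempty scopes, hence disjoint sets of descendants.
A subtree of `t` is then the same as an independent family of subtrees of the children
(restricting `σ` to the descendants of each child and summing such restrictions are inverse), and
the product over children of the sums over their subtrees expands into the sum over subtrees of
the products.
-/

namespace SPGM

variable {Xvar Zvar : Type} {Xdom : Xvar → ℕ} {Zdom : Zvar → ℕ} {S : SPGM Xvar Zvar Xdom Zdom}

lemma rank_le_of_reach {a b : S.V} (h : S.Reach a b) : S.rank b ≤ S.rank a := by
  induction h with
  | refl => exact le_rfl
  | tail _ hbc ih => exact (S.rank_lt _ _ hbc).le.trans ih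

lemma not_reach_of_mem_children {t c : S.V} (hc : c ∈ S.children t) : ¬ S.Reach c t :=
  fun h => (rank_le_of_reach h).not_gt (S.rank_lt t c hc)

lemma not_isSum_of_vnode {t : S.V} {x : Xvar} (hk : S.kind t = .vnode x) : ¬ S.isSum t := by
  simp [isSum, isSumObs, isSumUnobs, hk]

lemma not_isSum_of_prod {t : S.V} (hk : S.kind t = .prod) : ¬ S.isSum t := by
  simp [isSum, isSumObs, isSumUnobs, hk]

lemma length_children_pos (hS : S.Valid) {u : S.V} (hu : S.isSum u) :
    0 < (S.children u).length :=
  List.length_pos_iff.mpr (hS.sum_child u hu)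

lemma children_ne_nil (hS : S.Valid) {u : S.V} (hu : ¬ S.isVnode u) : S.children u ≠ [] := by
  cases hk : S.kind u with
  | vnode x => exact absurd ⟨x, hk⟩ hu
  | prod => exact hS.prod_child u hk
  | sumObs z => exact hS.sum_child u (Or.inl ⟨z, hk⟩)
  | sumUnobs => exact hS.sum_child u (Or.inr hk)

lemma exists_reach_isVnode (hS : S.Valid) (u : S.V) : ∃ v, S.Reach u v ∧ S.isVnode v := by
  by_cases hu : S.isVnode u
  · exact ⟨u, .refl, hu⟩
  · obtain ⟨c, hc⟩ := List.exists_mem_of_ne_nil _ (children_ne_nil hS hu)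
    obtain ⟨v, hcv, hv⟩ := exists_reach_isVnode hS c
    exact ⟨v, .head hc hcv, hv⟩
termination_by S.rank u
decreasing_by exact S.rank_lt u c hc

lemma scope_nonempty (hS : S.Valid) (u : S.V) : (S.scope u).Nonempty := by
  obtain ⟨v, huv, x, hx⟩ := exists_reach_isVnode hS u
  exact ⟨.inl x, v, huv, by simp [label, hx]⟩

lemma scope_subset_of_reach {a b : S.V} (h : S.Reach a b) : S.scope b ⊆ S.scope a :=
  fun _ ⟨u, hbu, hu⟩ => ⟨u, h.trans hbu, hu⟩

def descendants (S : SPGM Xvar Zvar Xdom Zdom) (r : S.V) : Set S.V := {u | S.Reach r u}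

lemma disjoint_descendants_of_disjoint_scope (hS : S.Valid) {a b : S.V}
    (h : Disjoint (S.scope a) (S.scope b)) : Disjoint (S.descendants a) (S.descendants b) := by
  refine Set.disjoint_left.mpr fun u hau hbu => ?_
  obtain ⟨v, hv⟩ := scope_nonempty hS u
  exact Set.disjoint_left.mp h (scope_subset_of_reach hau hv) (scope_subset_of_reach hbu hv)

lemma pairwise_disjoint_descendants_of_prod (hS : S.Valid) {t : S.V} (hk : S.kind t = .prod) :
    (S.children t).Pairwise fun c c' => Disjoint (S.descendants c) (S.descendants c') :=
  (hS.prod_scope t hk).imp (disjoint_descendants_of_disjoint_scope hS)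

lemma nodup_children_of_prod (hS : S.Valid) {t : S.V} (hk : S.kind t = .prod) :
    (S.children t).Nodup := by
  refine (pairwise_disjoint_descendants_of_prod hS hk).imp ?_
  rintro c _ hd rfl
  exact Set.disjoint_left.mp hd (.refl : S.Reach c c) .refl

section KeepAt

variable {σ σ' : S.V → ℕ}

lemma reach_getD_children (t : S.V) (k : ℕ) : S.Reach t ((S.children t).getD k t) := by
  rw [List.getD_eq_getElem?_getD]
  cases h : (S.children t)[k]? with
  | none => exact .refl
  | some c => exact .single (List.mem_of_getElem? h)

lemma reach_of_subEdge {a b : S.V} (h : S.subEdge σ a b) : S.Reach a b := by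
  rcases h with ⟨-, hb⟩ | ⟨-, rfl⟩
  · exact .single hb
  · exact reach_getD_children a (σ a)

lemma reach_of_keepAt {r u : S.V} (h : S.KeepAt σ r u) : S.Reach r u := by
  induction h with
  | refl => exact .refl
  | step _ hedge ih => exact ih.trans (reach_of_subEdge hedge)

lemma keepAt_of_subEdge {r b u : S.V} (hedge : S.subEdge σ r b) (h : S.KeepAt σ b u) :
    S.KeepAt σ r u := by
  induction h with
  | refl => exact .step (.refl r) hedge
  | step _ h ih => exact ih.step h

lemma keepAt_iff {r u : S.V} :
    S.KeepAt σ r u ↔ u = r ∨ ∃ b, S.subEdge σ r b ∧ S.KeepAt σ b u := by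
  refine ⟨fun h => ?_, ?_⟩
  · induction h with
    | refl => exact .inl rfl
    | @step t c _ htc ih =>
      rcases ih with rfl | ⟨b, hb, hbt⟩
      · exact .inr ⟨c, htc, .refl c⟩
      · exact .inr ⟨b, hb, hbt.step htc⟩
  · rintro (rfl | ⟨b, hb, hbu⟩)
    · exact .refl u
    · exact keepAt_of_subEdge hb hbu

lemma keepAt_iff_of_not_isSum {t u : S.V} (ht : ¬ S.isSum t) :
    S.KeepAt σ t u ↔ u = t ∨ ∃ c ∈ S.children t, S.KeepAt σ c u := by
  simp [keepAt_iff (r := t), subEdge, ht]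

lemma keepAt_iff_of_isSum {t u : S.V} (ht : S.isSum t) :
    S.KeepAt σ t u ↔ u = t ∨ S.KeepAt σ ((S.children t).getD (σ t) t) u := by
  simp [keepAt_iff (r := t), subEdge, ht]

lemma KeepAt.of_eqOn {r u : S.V} (heq : Set.EqOn σ σ' (S.descendants r))
    (h : S.KeepAt σ r u) : S.KeepAt σ' r u := by
  induction h with
  | refl => exact .refl r
  | @step t c hrt htc ih =>
    refine ih.step ?_
    rcases htc with htc | ⟨hts, rfl⟩
    · exact .inl htc
    · exact .inr ⟨hts, by rw [heq (reach_of_keepAt hrt)]⟩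

lemma keepAt_congr {r u : S.V} (heq : Set.EqOn σ σ' (S.descendants r)) :
    S.KeepAt σ r u ↔ S.KeepAt σ' r u :=
  ⟨.of_eqOn heq, .of_eqOn heq.symm⟩

end KeepAt

def InRange (S : SPGM Xvar Zvar Xdom Zdom) (σ : S.V → ℕ) : Prop :=
  ∀ u, S.isSum u → σ u < (S.children u).length

lemma getD_mem_children {t : S.V} {k : ℕ} (hk : k < (S.children t).length) :
    (S.children t).getD k t ∈ S.children t := by
  rw [List.getD_eq_getElem _ _ hk]
  exact List.getElem_mem hk

section Subtrees

variable {σ : S.V → ℕ}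

lemma mem_subtreesAt_iff {r : S.V} :
    σ ∈ S.subtreesAt r ↔ S.InRange σ ∧ ∀ u, σ u ≠ 0 → S.KeepAt σ r u ∧ S.isSum u :=
  and_congr_right' <| forall_congr' fun _ => not_imp_comm

lemma eq_zero_of_notMem_descendants {r u : S.V} (hσ : σ ∈ S.subtreesAt r)
    (hu : u ∉ S.descendants r) : σ u = 0 :=
  hσ.2 u fun h => hu (reach_of_keepAt h.1)

lemma subtreesAt_finite (r : S.V) : (S.subtreesAt r).Finite := by
  refine (Set.Finite.pi fun u : S.V => Set.finite_Iio ((S.children u).length + 1)).subset ?_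
  intro σ hσ u _
  by_cases h : S.KeepAt σ r u ∧ S.isSum u
  · exact Nat.lt_succ_of_lt (hσ.1 u h.2)
  · simp [hσ.2 u h]

def subtreesFinset (S : SPGM Xvar Zvar Xdom Zdom) (r : S.V) : Finset (S.V → ℕ) :=
  (S.subtreesAt_finite r).toFinset

@[simp]
lemma mem_subtreesFinset {r : S.V} : σ ∈ S.subtreesFinset r ↔ σ ∈ S.subtreesAt r :=
  Set.Finite.mem_toFinset _

lemma finsum_mem_subtreesAt {M : Type*} [AddCommMonoid M] (r : S.V) (f : (S.V → ℕ) → M) :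
    ∑ᶠ σ ∈ S.subtreesAt r, f σ = ∑ σ ∈ S.subtreesFinset r, f σ :=
  finsum_mem_eq_finite_toFinset_sum f (S.subtreesAt_finite r)

lemma mem_subtreesAt_of_not_isSum {t : S.V} (ht : ¬ S.isSum t) :
    σ ∈ S.subtreesAt t ↔
      S.InRange σ ∧ ∀ u, σ u ≠ 0 → ∃ c ∈ S.children t, S.KeepAt σ c u ∧ S.isSum u := by
  rw [mem_subtreesAt_iff]
  refine and_congr_right' <| forall_congr' fun u => imp_congr_right fun _ => ?_
  rw [keepAt_iff_of_not_isSum ht]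
  constructor
  · rintro ⟨rfl | ⟨c, hc, hcu⟩, hu⟩
    · exact absurd hu ht
    · exact ⟨c, hc, hcu, hu⟩
  · rintro ⟨c, hc, hcu, hu⟩
    exact ⟨.inr ⟨c, hc, hcu⟩, hu⟩

lemma subtreesAt_of_children_eq_nil (hS : S.Valid) {t : S.V} (ht : ¬ S.isSum t)
    (hc : S.children t = []) : S.subtreesAt t = {0} := by
  ext σ
  rw [mem_subtreesAt_of_not_isSum ht, hc, Set.mem_singleton_iff]
  simp only [List.not_mem_nil, false_and, exists_false, imp_false, not_not]
  refine ⟨fun h => funext h.2, ?_⟩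
  rintro rfl
  exact ⟨fun u hu => length_children_pos hS hu, fun _ => rfl⟩

lemma subtreesAt_of_children_eq_singleton {t c : S.V} (ht : ¬ S.isSum t)
    (hc : S.children t = [c]) : S.subtreesAt t = S.subtreesAt c := by
  ext σ
  rw [mem_subtreesAt_of_not_isSum ht, hc, mem_subtreesAt_iff]
  simp

lemma mem_subtreesAt_of_isSum (hS : S.Valid) {t : S.V} (ht : S.isSum t)
    (hσt : σ t < (S.children t).length) :
    σ ∈ S.subtreesAt t ↔
      Function.update σ t 0 ∈ S.subtreesAt ((S.children t).getD (σ t) t) := by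
  set c := (S.children t).getD (σ t) t
  have hnot : t ∉ S.descendants c := not_reach_of_mem_children (getD_mem_children hσt)
  have heq : Set.EqOn σ (Function.update σ t 0) (S.descendants c) := fun u hu =>
    (Function.update_of_ne (ne_of_mem_of_not_mem hu hnot) _ _).symm
  rw [mem_subtreesAt_iff, mem_subtreesAt_iff]
  refine and_congr ⟨fun h u hu => ?_, fun h u hu => ?_⟩ (forall_congr' fun u => ?_)
  · rcases eq_or_ne u t with rfl | hne
    · simpa using length_children_pos hS hu
    · simpa [hne] using h u hu
  · rcases eq_or_ne u t with rfl | hne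
    · exact hσt
    · simpa [hne] using h u hu
  · rcases eq_or_ne u t with rfl | hne
    · simp [KeepAt.refl, ht]
    · rw [Function.update_of_ne hne, keepAt_iff_of_isSum ht, ← keepAt_congr heq]
      simp [hne, c]

lemma filter_subtreesFinset_eq_image (hS : S.Valid) {t : S.V} (ht : S.isSum t) {k : ℕ}
    (hk : k < (S.children t).length) :
    (S.subtreesFinset t).filter (fun σ => σ t = k) =
      (S.subtreesFinset ((S.children t).getD k t)).image (Function.update · t k) := by
  have hzero : ∀ τ ∈ S.subtreesAt ((S.children t).getD k t), τ t = 0 := fun τ hτ =>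
    eq_zero_of_notMem_descendants hτ (not_reach_of_mem_children (getD_mem_children hk))
  ext σ
  simp only [Finset.mem_filter, Finset.mem_image, mem_subtreesFinset]
  constructor
  · rintro ⟨hσ, rfl⟩
    refine ⟨Function.update σ t 0, (mem_subtreesAt_of_isSum hS ht hk).mp hσ, ?_⟩
    simp
  · rintro ⟨τ, hτ, rfl⟩
    refine ⟨?_, by simp⟩
    rw [mem_subtreesAt_of_isSum hS ht (by simpa using hk)]
    simpa [← hzero τ hτ] using hτ

section Product

variable {t : S.V} {p : (S.children t).toFinset → S.V → ℕ}

lemma notMem_descendants_of_prod (hS : S.Valid) (hk : S.kind t = .prod)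
    {c c' : (S.children t).toFinset} (hne : c ≠ c') {u : S.V} (hu : u ∈ S.descendants c) :
    u ∉ S.descendants c' :=
  haveI : Std.Symm fun c c' => Disjoint (S.descendants c) (S.descendants c') :=
    ⟨fun _ _ h => h.symm⟩
  Set.disjoint_left.mp ((pairwise_disjoint_descendants_of_prod hS hk).forall
    (List.mem_toFinset.mp c.2) (List.mem_toFinset.mp c'.2) (Subtype.coe_ne_coe.mpr hne)) hu

lemma sum_apply_of_mem_descendants (hS : S.Valid) (hk : S.kind t = .prod)
    (hp : ∀ c : (S.children t).toFinset, p c ∈ S.subtreesAt c)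
    {c : (S.children t).toFinset} {u : S.V}
    (hu : u ∈ S.descendants c) : (∑ c', p c') u = p c u := by
  rw [Finset.sum_apply, Finset.sum_eq_single c (fun c' _ hne =>
    eq_zero_of_notMem_descendants (hp c') (notMem_descendants_of_prod hS hk hne.symm hu))
    (by simp)]

lemma sum_mem_subtreesAt_of_prod (hS : S.Valid) (hk : S.kind t = .prod)
    (hp : ∀ c : (S.children t).toFinset, p c ∈ S.subtreesAt c) : ∑ c, p c ∈ S.subtreesAt t := by
  rw [mem_subtreesAt_of_not_isSum (not_isSum_of_prod hk)]
  refine ⟨fun u hu => ?_, fun u hu => ?_⟩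
  · by_cases h : ∃ c : (S.children t).toFinset, u ∈ S.descendants c
    · obtain ⟨c, hc⟩ := h
      rw [sum_apply_of_mem_descendants hS hk hp hc]
      exact (hp c).1 u hu
    · rw [Finset.sum_apply, Finset.sum_eq_zero fun c _ =>
        eq_zero_of_notMem_descendants (hp c) fun hc => h ⟨c, hc⟩]
      exact length_children_pos hS hu
  · rw [Finset.sum_apply] at hu
    obtain ⟨c, -, hcu⟩ := Finset.exists_ne_zero_of_sum_ne_zero hu
    obtain ⟨hkeep, hsum⟩ := (mem_subtreesAt_iff.mp (hp c)).2 u hcu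
    refine ⟨c, List.mem_toFinset.mp c.2, ?_, hsum⟩
    exact (keepAt_congr fun v hv => (sum_apply_of_mem_descendants hS hk hp hv).symm).mp hkeep

lemma indicator_sum_of_prod (hS : S.Valid) (hk : S.kind t = .prod)
    (hp : ∀ c : (S.children t).toFinset, p c ∈ S.subtreesAt c) (c : (S.children t).toFinset) :
    (S.descendants c).indicator (∑ c', p c') = p c := by
  funext u
  by_cases hu : u ∈ S.descendants c
  · rw [Set.indicator_of_mem hu, sum_apply_of_mem_descendants hS hk hp hu]
  · rw [Set.indicator_of_notMem hu, eq_zero_of_notMem_descendants (hp c) hu]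

lemma exists_keepAt_of_prod (hk : S.kind t = .prod) (hσ : σ ∈ S.subtreesAt t) {u : S.V}
    (hu : σ u ≠ 0) : ∃ c : (S.children t).toFinset, S.KeepAt σ c u ∧ S.isSum u := by
  obtain ⟨c, hc, hcu⟩ := ((mem_subtreesAt_of_not_isSum (not_isSum_of_prod hk)).mp hσ).2 u hu
  exact ⟨⟨c, List.mem_toFinset.mpr hc⟩, hcu⟩

lemma indicator_mem_subtreesAt_of_prod (hS : S.Valid) (hk : S.kind t = .prod)
    (hσ : σ ∈ S.subtreesAt t) (c : (S.children t).toFinset) :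
    (S.descendants c).indicator σ ∈ S.subtreesAt c := by
  rw [mem_subtreesAt_iff]
  refine ⟨fun u hu => ?_, fun u hu => ?_⟩
  · by_cases hc : u ∈ S.descendants c
    · rw [Set.indicator_of_mem hc]
      exact hσ.1 u hu
    · rw [Set.indicator_of_notMem hc]
      exact length_children_pos hS hu
  · obtain ⟨hc, hσu⟩ := Set.indicator_apply_ne_zero.mp hu
    obtain ⟨c', hkeep, hsum⟩ := exists_keepAt_of_prod hk hσ hσu
    obtain rfl : c' = c := by
      by_contra hne
      exact notMem_descendants_of_prod hS hk hne (reach_of_keepAt hkeep) hc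
    exact ⟨(keepAt_congr Set.eqOn_indicator.symm).mp hkeep, hsum⟩

lemma sum_indicator_of_prod (hS : S.Valid) (hk : S.kind t = .prod) (hσ : σ ∈ S.subtreesAt t) :
    ∑ c : (S.children t).toFinset, (S.descendants c).indicator σ = σ := by
  funext u
  rw [Finset.sum_apply]
  by_cases hu : σ u = 0
  · simp [hu]
  · obtain ⟨c, hkeep, -⟩ := exists_keepAt_of_prod hk hσ hu
    have hc : u ∈ S.descendants c := reach_of_keepAt hkeep
    rw [Finset.sum_eq_single c (fun c' _ hne => Set.indicator_of_notMem
      (notMem_descendants_of_prod hS hk hne.symm hc) _) (by simp), Set.indicator_of_mem hc]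

end Product

end Subtrees

section Messages

variable (y : (Xvar ⊕ Zvar) → Option ℕ)

lemma msgAux_eq_of_rank_lt {n m : ℕ} {t : S.V} (hn : S.rank t < n) (hm : S.rank t < m)
    (s : Option S.V) (j : ℕ) : S.msgAux y n t s j = S.msgAux y m t s j := by
  induction n generalizing m t s j with
  | zero => omega
  | succ n ih =>
    obtain ⟨m, rfl⟩ : ∃ m', m = m' + 1 := ⟨m - 1, by omega⟩
    have hchild : ∀ c ∈ S.children t, ∀ s j, S.msgAux y n c s j = S.msgAux y m c s j :=
      fun c hc s j => ih (by have := S.rank_lt t c hc; omega)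
        (by have := S.rank_lt t c hc; omega) s j
    rcases hk : S.kind t with x | _ | z | _ <;> simp only [msgAux, hk]
    · rcases hc : S.children t with _ | ⟨c, cs⟩
      · rfl
      · simp only [hchild c (by simp [hc])]
    · rw [List.map_congr_left fun c hc => hchild c hc s j]
    all_goals
      refine Finset.sum_congr rfl fun k hk => ?_
      rw [hchild _ (getD_mem_children (Finset.mem_range.mp hk))]

-- `InRange` is needed: for an out-of-range choice `getD` falls back to `t` itself.
lemma msgSubAux_eq_of_rank_lt {σ : S.V → ℕ} (hσ : S.InRange σ) {n m : ℕ} {t : S.V}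
    (hn : S.rank t < n) (hm : S.rank t < m) (s : Option S.V) (j : ℕ) :
    S.msgSubAux σ y n t s j = S.msgSubAux σ y m t s j := by
  induction n generalizing m t s j with
  | zero => omega
  | succ n ih =>
    obtain ⟨m, rfl⟩ : ∃ m', m = m' + 1 := ⟨m - 1, by omega⟩
    have hchild : ∀ c ∈ S.children t, ∀ s j, S.msgSubAux σ y n c s j = S.msgSubAux σ y m c s j :=
      fun c hc s j => ih (by have := S.rank_lt t c hc; omega)
        (by have := S.rank_lt t c hc; omega) s j
    rcases hk : S.kind t with x | _ | z | _ <;> simp only [msgSubAux, hk]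
    · rcases hc : S.children t with _ | ⟨c, cs⟩
      · rfl
      · simp only [hchild c (by simp [hc])]
    · rw [List.map_congr_left fun c hc => hchild c hc s j]
    · rw [hchild _ (getD_mem_children (hσ t (.inl ⟨z, hk⟩)))]
    · rw [hchild _ (getD_mem_children (hσ t (.inr hk)))]

lemma msgSubAux_congr {σ σ' : S.V → ℕ} {t : S.V} (heq : Set.EqOn σ σ' (S.descendants t))
    (n : ℕ) (s : Option S.V) (j : ℕ) :
    S.msgSubAux σ y n t s j = S.msgSubAux σ' y n t s j := by
  induction n generalizing t s j with
  | zero => rfl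
  | succ n ih =>
    have hchild : ∀ c, S.Reach t c → ∀ s j, S.msgSubAux σ y n c s j = S.msgSubAux σ' y n c s j :=
      fun c htc s j => ih (fun u hu => heq (htc.trans hu)) s j
    rcases hk : S.kind t with x | _ | z | _ <;> simp only [msgSubAux, hk]
    · rcases hc : S.children t with _ | ⟨c, cs⟩
      · rfl
      · simp only [hchild c (.single (by simp [hc]))]
    · rw [List.map_congr_left fun c hc => hchild c (.single hc) s j]
    all_goals rw [heq .refl, hchild _ (reach_getD_children t _)]

def ExpandsOverSubtrees (S : SPGM Xvar Zvar Xdom Zdom) (n : ℕ) (c : S.V) : Prop :=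
  ∀ s j, S.msgAux y n c s j = ∑ σ ∈ S.subtreesFinset c, S.msgSubAux σ y n c s j

lemma expandsOverSubtrees_of_msg_eq {c : S.V} {n : ℕ} (hn : S.rank c < n)
    (h : ∀ s j, S.msg y c s j = ∑ᶠ σ ∈ S.subtreesAt c, S.msgSub σ y c s j) :
    S.ExpandsOverSubtrees y n c := by
  intro s j
  rw [msgAux_eq_of_rank_lt y hn (Nat.lt_succ_self _), ← msg, h, finsum_mem_subtreesAt]
  refine Finset.sum_congr rfl fun σ hσ => ?_
  exact msgSubAux_eq_of_rank_lt y (mem_subtreesFinset.mp hσ).1 (Nat.lt_succ_self _) hn s j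

variable {t : S.V}

lemma msg_eq_sum_subtrees_of_vnode (hS : S.Valid) {x : Xvar} (hk : S.kind t = .vnode x)
    (hchild : ∀ c ∈ S.children t, S.ExpandsOverSubtrees y (S.rank t) c) (s : Option S.V) (j : ℕ) :
    S.msg y t s j = ∑ σ ∈ S.subtreesFinset t, S.msgSub σ y t s j := by
  have ht := not_isSum_of_vnode hk
  rcases hc : S.children t with _ | ⟨c, cs⟩
  · have h0 : S.subtreesFinset t = {0} := by
      ext σ
      simp [subtreesAt_of_children_eq_nil hS ht hc]
    simp [h0, msg, msgSub, msgAux, msgSubAux, hk, hc]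
  · obtain rfl : cs = [] := by simpa [hc] using hS.vnode_child t ⟨x, hk⟩
    have hT : S.subtreesFinset t = S.subtreesFinset c := by
      ext σ
      simp [subtreesAt_of_children_eq_singleton ht hc]
    simp only [msg, msgSub, msgAux, msgSubAux, hk, hc, hT]
    rw [Finset.sum_comm]
    refine Finset.sum_congr rfl fun k _ => ?_
    rw [hchild c (by simp [hc]) (some t) k, Finset.mul_sum]

lemma sum_mul_msgAux_eq_sum_subtrees (hS : S.Valid) (ht : S.isSum t) (w : ℕ → ℝ)
    (hchild : ∀ c ∈ S.children t, S.ExpandsOverSubtrees y (S.rank t) c) (s : Option S.V) (j : ℕ) :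
    ∑ k ∈ Finset.range (S.children t).length,
        w k * S.msgAux y (S.rank t) ((S.children t).getD k t) s j =
      ∑ σ ∈ S.subtreesFinset t,
        w (σ t) * S.msgSubAux σ y (S.rank t) ((S.children t).getD (σ t) t) s j := by
  have hmaps : ∀ σ ∈ S.subtreesFinset t, σ t ∈ Finset.range (S.children t).length :=
    fun σ hσ => Finset.mem_range.mpr ((mem_subtreesFinset.mp hσ).1 t ht)
  rw [← Finset.sum_fiberwise_of_maps_to hmaps]
  refine Finset.sum_congr rfl fun k hk => ?_
  have hk := Finset.mem_range.mp hk
  set c := (S.children t).getD k t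
  have hnot : t ∉ S.descendants c := not_reach_of_mem_children (getD_mem_children hk)
  calc w k * S.msgAux y (S.rank t) c s j
      = ∑ τ ∈ S.subtreesFinset c, w k * S.msgSubAux τ y (S.rank t) c s j := by
        rw [hchild c (getD_mem_children hk), Finset.mul_sum]
    _ = ∑ τ ∈ S.subtreesFinset c,
          w k * S.msgSubAux (Function.update τ t k) y (S.rank t) c s j := by
        refine Finset.sum_congr rfl fun τ _ => ?_
        rw [msgSubAux_congr y fun u hu =>
          (Function.update_of_ne (ne_of_mem_of_not_mem hu hnot) _ _).symm]
    _ = ∑ σ ∈ (S.subtreesFinset c).image (Function.update · t k),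
          w (σ t) * S.msgSubAux σ y (S.rank t) ((S.children t).getD (σ t) t) s j := by
        rw [Finset.sum_image]
        · simp [c]
        · intro τ hτ τ' hτ' h
          have hτ0 := eq_zero_of_notMem_descendants (mem_subtreesFinset.mp hτ) hnot
          have hτ'0 := eq_zero_of_notMem_descendants (mem_subtreesFinset.mp hτ') hnot
          have h0 := congrArg (Function.update · t 0) h
          simp only [Function.update_idem] at h0
          rwa [Function.update_eq_self_iff.mpr hτ0.symm,
            Function.update_eq_self_iff.mpr hτ'0.symm] at h0
    _ = _ := by rw [filter_subtreesFinset_eq_image hS ht hk]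

lemma msg_eq_sum_subtrees_of_prod (hS : S.Valid) (hk : S.kind t = .prod)
    (hchild : ∀ c ∈ S.children t, S.ExpandsOverSubtrees y (S.rank t) c) (s : Option S.V) (j : ℕ) :
    S.msg y t s j = ∑ σ ∈ S.subtreesFinset t, S.msgSub σ y t s j := by
  have hprod : ∀ f : S.V → ℝ,
      ((S.children t).map f).prod = ∏ c : (S.children t).toFinset, f c := fun f => by
    rw [← List.prod_toFinset f (nodup_children_of_prod hS hk), Finset.prod_coe_sort]
  simp only [msg, msgSub, msgAux, msgSubAux, hk, hprod]
  calc ∏ c : (S.children t).toFinset, S.msgAux y (S.rank t) c s j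
      = ∏ c : (S.children t).toFinset,
          ∑ τ ∈ S.subtreesFinset c, S.msgSubAux τ y (S.rank t) c s j :=
        Finset.prod_congr rfl fun c _ => hchild c (List.mem_toFinset.mp c.2) s j
    _ = ∑ p ∈ Fintype.piFinset fun c : (S.children t).toFinset => S.subtreesFinset c,
          ∏ c, S.msgSubAux (p c) y (S.rank t) c s j := Finset.prod_univ_sum _ _
    _ = ∑ σ ∈ S.subtreesFinset t,
          ∏ c : (S.children t).toFinset, S.msgSubAux σ y (S.rank t) c s j := by
      refine Finset.sum_nbij' (fun p => ∑ c, p c) (fun σ c => (S.descendants c).indicator σ)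
        ?_ ?_ ?_ ?_ ?_ <;> simp only [Fintype.mem_piFinset, mem_subtreesFinset]
      · exact fun p hp => sum_mem_subtreesAt_of_prod hS hk hp
      · exact fun σ hσ => indicator_mem_subtreesAt_of_prod hS hk hσ
      · exact fun p hp => funext (indicator_sum_of_prod hS hk hp)
      · exact fun σ hσ => sum_indicator_of_prod hS hk hσ
      · refine fun p hp => Finset.prod_congr rfl fun c _ => msgSubAux_congr y (fun u hu => ?_) _ _ _
        exact (sum_apply_of_mem_descendants hS hk hp hu).symm

lemma msg_eq_sum_subtrees_of_isSum (hS : S.Valid) (ht : S.isSum t)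
    (hchild : ∀ c ∈ S.children t, S.ExpandsOverSubtrees y (S.rank t) c) (s : Option S.V) (j : ℕ) :
    S.msg y t s j = ∑ σ ∈ S.subtreesFinset t, S.msgSub σ y t s j := by
  rcases ht with ⟨z, hk⟩ | (hk : S.kind t = .sumUnobs) <;>
    simp only [msg, msgSub, msgAux, msgSubAux, hk]
  · exact sum_mul_msgAux_eq_sum_subtrees y hS (.inl ⟨z, hk⟩) _ hchild s j
  · exact sum_mul_msgAux_eq_sum_subtrees y hS (.inr hk) _ hchild s j

end Messages

end SPGM

theorem spgm_message_eq_sum_subtrees_general {Xvar Zvar : Type} {Xdom : Xvar → ℕ} {Zdom : Zvar → ℕ}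
    (S : SPGM Xvar Zvar Xdom Zdom) (hS : S.Valid) (t : S.V)
    (hchild : ∀ c ∈ S.children t, ∀ (s : Option S.V) (j : ℕ)
      (y : (Xvar ⊕ Zvar) → Option ℕ),
      S.msg y c s j = ∑ᶠ σ ∈ S.subtreesAt c, S.msgSub σ y c s j) :
    ∀ (s : Option S.V) (j : ℕ) (y : (Xvar ⊕ Zvar) → Option ℕ),
      S.msg y t s j = ∑ᶠ σ ∈ S.subtreesAt t, S.msgSub σ y t s j := by
  intro s j y
  have hexp : ∀ c ∈ S.children t, S.ExpandsOverSubtrees y (S.rank t) c := fun c hc =>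
    SPGM.expandsOverSubtrees_of_msg_eq y (S.rank_lt t c hc) fun s j => hchild c hc s j y
  rw [SPGM.finsum_mem_subtreesAt]
  rcases hk : S.kind t with x | _ | z | _
  · exact SPGM.msg_eq_sum_subtrees_of_vnode y hS hk hexp s j
  · exact SPGM.msg_eq_sum_subtrees_of_prod y hS hk hexp s j
  · exact SPGM.msg_eq_sum_subtrees_of_isSum y hS (.inl ⟨z, hk⟩) hexp s j
  · exact SPGM.msg_eq_sum_subtrees_of_isSum y hS (.inr hk) hexp s j

/-- inductive step of the subtree-decomposition of SPGM messages.
Let `S` be a valid SPGM and `t` a node of `S` such that every message sent by every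
child `c` of `t` satisfies, for every partial assignment `y`,
`μ_{c→s;j} = ∑_{τ ∈ T(S_c)} μ_{root(τ)→s;j}`, where `S_c` is the sub-SPGM rooted at `c`
and the summand is the corresponding message computed within the subtree `τ`.  Then
every message sent by `t` satisfies the same identity with `T(S_t)` in place of
`T(S_c)`. -/
theorem spgm_message_eq_sum_subtrees {Xvar Zvar : Type} {Xdom : Xvar → ℕ} {Zdom : Zvar → ℕ}
    (S : SPGM Xvar Zvar Xdom Zdom) (hS : S.Valid) (hN : S.Normalized) (t : S.V)
    (hchild : ∀ c ∈ S.children t, ∀ (s : Option S.V) (j : ℕ)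
      (y : (Xvar ⊕ Zvar) → Option ℕ),
      S.msg y c s j = ∑ᶠ σ ∈ S.subtreesAt c, S.msgSub σ y c s j) :
    ∀ (s : Option S.V) (j : ℕ) (y : (Xvar ⊕ Zvar) → Option ℕ),
      S.msg y t s j = ∑ᶠ σ ∈ S.subtreesAt t, S.msgSub σ y t s j :=
  spgm_message_eq_sum_subtrees_general S hS t hchild
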